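/- Let a > 0, D₁ > 0, D₂ > 0, τ > 0, t > 0, r₀ > 0. Set u = 1/(4·D₁·τ) + 1/(4·D₂·t), v = −a/(2·D₁·τ) − r₀/(2·D₂·t), and w = −a/(2·D₁·τ) + r₀/(2·D₂·t). Then ∫₀^∞ ĥ(r,τ)·f_{r,t}(r) dr = (a/(4·√(π·(D₁·τ + D₂·t))·r₀·τ))·exp(−a²/(4·D₁·τ) − r₀²/(4·D₂·t))·[ −exp(v²/(4u))·(v/(2u) + a)·erfc(v/(2√u)) + exp(w²/(4u))·(w/(2u) + a)·erfc(w/(2√u)) ], where erfc is the complementary error function. -/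

import Mathlib

open MeasureTheory Real

/-- The Gauss error function. -/
noncomputable def erf (x : ℝ) : ℝ :=
  (2 / Real.sqrt π) * ∫ u in (0:ℝ)..x, Real.exp (-u ^ 2)

/-- The complementary error function. -/
noncomputable def erfc (x : ℝ) : ℝ := 1 - erf x

/-- The channel impulse response at distance `r` and elapsed time `τ`. -/
noncomputable def hCIR (a D₁ τ r : ℝ) : ℝ :=
  a / Real.sqrt (4 * π * D₁ * τ ^ 3) * (1 - a / r) * Real.exp (-(r - a) ^ 2 / (4 * D₁ * τ))

/-- The density of the distance between transmitter and receiver at time `t`. -/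
noncomputable def fdist (r₀ D₂ t x : ℝ) : ℝ :=
  if 0 < x then
    x / (r₀ * Real.sqrt (π * D₂ * t)) * Real.exp (-(x ^ 2 + r₀ ^ 2) / (4 * D₂ * t))
      * Real.sinh (r₀ * x / (2 * D₂ * t))
  else 0

/-!
For `r > 0` the factor `(1 - a / r)` of `ĥ` cancels the factor `r` of the distance density, and
writing `sinh` as a difference of exponentials turns the integrand into
`K * (r - a) * (exp (-u r² - v r) - exp (-u r² - w r))`. Completing the square,
`exp (-u r² - c r) = exp (c² / 4u) * exp (-u (r + c / 2u)²)`, so after a shift each of the two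
integrals is a Gaussian first moment, which equals `1 / 2u` in both cases and cancels in the
difference, minus a multiple of a Gaussian tail `√π / (2√u) * erfc (c / 2√u)`.
-/

open Set Filter Topology

lemma hasDerivAt_erf (x : ℝ) : HasDerivAt erf (2 / √π * exp (-x ^ 2)) x := by
  have hc : Continuous fun s : ℝ => exp (-s ^ 2) := by fun_prop
  exact (intervalIntegral.integral_hasDerivAt_right (hc.intervalIntegrable 0 x)
    hc.stronglyMeasurable.stronglyMeasurableAtFilter hc.continuousAt).const_mul _

lemma integrableOn_exp_neg_sq (s : Set ℝ) : IntegrableOn (fun x : ℝ => exp (-x ^ 2)) s := by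
  simpa using (integrable_exp_neg_mul_sq one_pos).integrableOn (s := s)

lemma tendsto_erf_atTop : Tendsto erf atTop (𝓝 1) := by
  have h := (intervalIntegral_tendsto_integral_Ioi 0 (integrableOn_exp_neg_sq _)
    tendsto_id).const_mul (2 / √π)
  have hhalf : ∫ s in Ioi (0 : ℝ), exp (-s ^ 2) = √π / 2 := by
    simpa using integral_gaussian_Ioi 1
  have hone : 2 / √π * (√π / 2) = 1 := by field_simp
  rwa [hhalf, hone] at h

lemma integral_Ioi_exp_neg_sq (m : ℝ) : ∫ s in Ioi m, exp (-s ^ 2) = √π / 2 * erfc m := by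
  have hderiv (x : ℝ) : HasDerivAt (fun s => √π / 2 * erf s) (exp (-x ^ 2)) x := by
    have hπ : √π ≠ 0 := by positivity
    refine ((hasDerivAt_erf x).const_mul (√π / 2)).congr_deriv ?_
    field_simp
  rw [integral_Ioi_of_hasDerivAt_of_tendsto' (fun x _ => hderiv x) (integrableOn_exp_neg_sq _)
    (tendsto_erf_atTop.const_mul _), erfc]
  ring

lemma integral_Ioi_exp_neg_mul_sq {u : ℝ} (hu : 0 < u) (m : ℝ) :
    ∫ s in Ioi m, exp (-u * s ^ 2) = √π / (2 * √u) * erfc (√u * m) := by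
  have hsq (x : ℝ) : exp (-(√u * x) ^ 2) = exp (-u * x ^ 2) := by
    rw [mul_pow, sq_sqrt hu.le, neg_mul]
  have h := integral_comp_mul_left_Ioi (fun x => exp (-x ^ 2)) m (sqrt_pos.mpr hu)
  simp only [hsq] at h
  rw [h, integral_Ioi_exp_neg_sq, smul_eq_mul]
  ring

lemma integral_Ioi_mul_exp_neg_mul_sq {u : ℝ} (hu : 0 < u) (m : ℝ) :
    ∫ s in Ioi m, s * exp (-u * s ^ 2) = exp (-u * m ^ 2) / (2 * u) := by
  have hderiv (x : ℝ) :
      HasDerivAt (fun s => -exp (-u * s ^ 2) / (2 * u)) (x * exp (-u * x ^ 2)) x := by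
    refine (((hasDerivAt_pow 2 x).const_mul (-u)).exp.neg.div_const (2 * u)).congr_deriv ?_
    field_simp
    norm_num
    ring
  have hlim : Tendsto (fun s : ℝ => -exp (-u * s ^ 2) / (2 * u)) atTop (𝓝 0) := by
    have h := (tendsto_pow_atTop two_ne_zero).const_mul_atTop hu
    simpa using ((tendsto_exp_atBot.comp (tendsto_neg_atTop_atBot.comp h)).neg.div_const (2 * u))
  rw [integral_Ioi_of_hasDerivAt_of_tendsto' (fun x _ => hderiv x)
    (integrable_mul_exp_neg_mul_sq hu).integrableOn hlim]
  ring

lemma setIntegral_Ioi_comp_add_right {E : Type*} [NormedAddCommGroup E] [NormedSpace ℝ E]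
    (g : ℝ → E) (a c : ℝ) : ∫ x in Ioi a, g (x + c) = ∫ x in Ioi (a + c), g x := by
  rw [← integral_indicator measurableSet_Ioi, ← integral_indicator measurableSet_Ioi,
    ← integral_add_right_eq_self ((Ioi (a + c)).indicator g) c]
  congr 1 with x
  simp only [indicator_apply, mem_Ioi, add_lt_add_iff_right]

lemma exp_neg_mul_sq_sub_mul_eq {u : ℝ} (hu : u ≠ 0) (b r : ℝ) :
    exp (-u * r ^ 2 - b * r) = exp (b ^ 2 / (4 * u)) * exp (-u * (r + b / (2 * u)) ^ 2) := by
  rw [← exp_add]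
  congr 1
  field_simp
  ring

lemma integrable_sub_mul_exp_neg_mul_sq_sub_mul {u : ℝ} (hu : 0 < u) (b c : ℝ) :
    Integrable fun r : ℝ => (r - c) * exp (-u * r ^ 2 - b * r) := by
  have h : Integrable fun s : ℝ => s * exp (-u * s ^ 2) - (b / (2 * u) + c) * exp (-u * s ^ 2) :=
    (integrable_mul_exp_neg_mul_sq hu).sub ((integrable_exp_neg_mul_sq hu).const_mul _)
  convert (h.comp_add_right (b / (2 * u))).const_mul (exp (b ^ 2 / (4 * u))) using 2 with r
  rw [exp_neg_mul_sq_sub_mul_eq hu.ne']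
  ring

lemma integral_Ioi_zero_sub_mul_exp_neg_mul_sq_sub_mul {u : ℝ} (hu : 0 < u) (b c : ℝ) :
    ∫ r in Ioi 0, (r - c) * exp (-u * r ^ 2 - b * r)
      = 1 / (2 * u) - (b / (2 * u) + c) * (√π / (2 * √u))
          * exp (b ^ 2 / (4 * u)) * erfc (b / (2 * √u)) := by
  set m := b / (2 * u) with hm_def
  have hshift : ∫ r in Ioi 0, (r - c) * exp (-u * r ^ 2 - b * r)
      = exp (b ^ 2 / (4 * u))
          * ∫ s in Ioi m, (s * exp (-u * s ^ 2) - (m + c) * exp (-u * s ^ 2)) := by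
    rw [← integral_const_mul, ← zero_add m, ← setIntegral_Ioi_comp_add_right, zero_add]
    congr 1 with r
    rw [exp_neg_mul_sq_sub_mul_eq hu.ne', ← hm_def]
    ring
  have hm : √u * m = b / (2 * √u) := by
    rw [hm_def]
    field_simp
    rw [sq_sqrt hu.le, mul_comm]
  have hcancel : exp (b ^ 2 / (4 * u)) * exp (-u * m ^ 2) = 1 := by
    rw [← exp_add, ← exp_zero, hm_def]
    congr 1
    field_simp
    ring
  rw [hshift, integral_sub (integrable_mul_exp_neg_mul_sq hu).integrableOn
    ((integrable_exp_neg_mul_sq hu).const_mul _).integrableOn, integral_const_mul,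
    integral_Ioi_mul_exp_neg_mul_sq hu, integral_Ioi_exp_neg_mul_sq hu, hm]
  linear_combination hcancel / (2 * u)

lemma hCIR_mul_fdist_of_pos {a D₁ D₂ τ t r₀ u v w r : ℝ} (hD₁τ : D₁ * τ ≠ 0) (hD₂t : D₂ * t ≠ 0)
    (hu : u = 1 / (4 * D₁ * τ) + 1 / (4 * D₂ * t))
    (hv : v = -(a / (2 * D₁ * τ)) - r₀ / (2 * D₂ * t))
    (hw : w = -(a / (2 * D₁ * τ)) + r₀ / (2 * D₂ * t)) (hr : 0 < r) :
    hCIR a D₁ τ r * fdist r₀ D₂ t r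
      = a / (2 * √(4 * π * D₁ * τ ^ 3) * (r₀ * √(π * D₂ * t)))
          * exp (-(a ^ 2) / (4 * D₁ * τ) - r₀ ^ 2 / (4 * D₂ * t))
          * ((r - a) * exp (-u * r ^ 2 - v * r) - (r - a) * exp (-u * r ^ 2 - w * r)) := by
  have hD₁ : D₁ ≠ 0 := left_ne_zero_of_mul hD₁τ
  have hτ : τ ≠ 0 := right_ne_zero_of_mul hD₁τ
  have hD₂ : D₂ ≠ 0 := left_ne_zero_of_mul hD₂t
  have ht : t ≠ 0 := right_ne_zero_of_mul hD₂t
  have hexp (σ c : ℝ) (hc : c = -(a / (2 * D₁ * τ)) - σ * (r₀ / (2 * D₂ * t))) :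
      exp (-(r - a) ^ 2 / (4 * D₁ * τ)) * exp (-(r ^ 2 + r₀ ^ 2) / (4 * D₂ * t))
        * exp (σ * (r₀ * r / (2 * D₂ * t)))
      = exp (-(a ^ 2) / (4 * D₁ * τ) - r₀ ^ 2 / (4 * D₂ * t)) * exp (-u * r ^ 2 - c * r) := by
    simp only [← exp_add]
    congr 1
    rw [hu, hc]
    field_simp
    ring
  have h_plus := hexp 1 v (by rw [hv]; ring)
  have h_minus := hexp (-1) w (by rw [hw]; ring)
  rw [one_mul] at h_plus
  rw [neg_one_mul] at h_minus
  have hfactor : (1 - a / r) * r = r - a := by field_simp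
  set P := a / (2 * √(4 * π * D₁ * τ ^ 3) * (r₀ * √(π * D₂ * t)))
  set E := exp (-(a ^ 2) / (4 * D₁ * τ) - r₀ ^ 2 / (4 * D₂ * t))
  rw [hCIR, fdist, if_pos hr, sinh_eq]
  linear_combination P * ((1 - a / r) * r) * (h_plus - h_minus)
    + P * (E * exp (-u * r ^ 2 - v * r) - E * exp (-u * r ^ 2 - w * r)) * hfactor

lemma sqrt_mul_sqrt_mul_sqrt_eq {D₁ D₂ τ t u : ℝ} (hD₁ : 0 < D₁) (hD₂ : 0 < D₂) (hτ : 0 < τ)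
    (ht : 0 < t) (hu : u = 1 / (4 * D₁ * τ) + 1 / (4 * D₂ * t)) :
    √(4 * π * D₁ * τ ^ 3) * √(π * D₂ * t) * √u = √π * √(π * (D₁ * τ + D₂ * t)) * τ := by
  have harg : 4 * π * D₁ * τ ^ 3 * (π * D₂ * t) * u = π * (π * (D₁ * τ + D₂ * t)) * τ ^ 2 := by
    rw [hu]
    field_simp
    ring
  rw [← sqrt_mul (by positivity), ← sqrt_mul (by positivity), harg, sqrt_mul (by positivity),
    sqrt_sq hτ.le, sqrt_mul pi_pos.le]

theorem mean_CIR (a D₁ D₂ τ t r₀ : ℝ) (hD₁ : 0 < D₁) (hD₂ : 0 < D₂)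
    (hτ : 0 < τ) (ht : 0 < t)
    (u v w : ℝ)
    (hu : u = 1 / (4 * D₁ * τ) + 1 / (4 * D₂ * t))
    (hv : v = -(a / (2 * D₁ * τ)) - r₀ / (2 * D₂ * t))
    (hw : w = -(a / (2 * D₁ * τ)) + r₀ / (2 * D₂ * t)) :
    ∫ r in Set.Ioi (0:ℝ), hCIR a D₁ τ r * fdist r₀ D₂ t r
      = a / (4 * Real.sqrt (π * (D₁ * τ + D₂ * t)) * r₀ * τ)
          * Real.exp (-(a ^ 2) / (4 * D₁ * τ) - r₀ ^ 2 / (4 * D₂ * t))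
          * (-(Real.exp (v ^ 2 / (4 * u)) * (v / (2 * u) + a)
                * erfc (v / (2 * Real.sqrt u)))
             + Real.exp (w ^ 2 / (4 * u)) * (w / (2 * u) + a)
                * erfc (w / (2 * Real.sqrt u))) := by
  have hu₀ : 0 < u := by rw [hu]; positivity
  set E := exp (-(a ^ 2) / (4 * D₁ * τ) - r₀ ^ 2 / (4 * D₂ * t))
  set K := a / (2 * √(4 * π * D₁ * τ ^ 3) * (r₀ * √(π * D₂ * t))) * E
  have hcoeff : K * (√π / (2 * √u)) = a / (4 * √(π * (D₁ * τ + D₂ * t)) * r₀ * τ) * E := by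
    have hπ : √π ≠ 0 := by positivity
    calc K * (√π / (2 * √u))
        = a * E * √π / (4 * r₀ * (√(4 * π * D₁ * τ ^ 3) * √(π * D₂ * t) * √u)) := by ring
      _ = _ := by
        rw [sqrt_mul_sqrt_mul_sqrt_eq hD₁ hD₂ hτ ht hu]
        field_simp
  rw [setIntegral_congr_fun measurableSet_Ioi fun r hr =>
      hCIR_mul_fdist_of_pos (by positivity) (by positivity) hu hv hw hr,
    integral_const_mul,
    integral_sub (integrable_sub_mul_exp_neg_mul_sq_sub_mul hu₀ v a).integrableOn
      (integrable_sub_mul_exp_neg_mul_sq_sub_mul hu₀ w a).integrableOn,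
    integral_Ioi_zero_sub_mul_exp_neg_mul_sq_sub_mul hu₀,
    integral_Ioi_zero_sub_mul_exp_neg_mul_sq_sub_mul hu₀]
  linear_combination (exp (w ^ 2 / (4 * u)) * (w / (2 * u) + a) * erfc (w / (2 * √u))
      - exp (v ^ 2 / (4 * u)) * (v / (2 * u) + a) * erfc (v / (2 * √u))) * hcoeff
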